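/- arXiv:1205.5952 — 2 statements merged into one kernel-verified Lean document; each statement's English description precedes it below -/
import Mathlib

section
/- Let 𝔤 be a skew-symmetric algebra and L : 𝔤 → ℝ smooth. For smooth curves a, h, f, Δf : [t₀,t₁] → 𝔤 with f, h, Δf vanishing at the endpoints, define J[a,h,f] := [[a,h],f] − [a,[h,f]] + [h,[a,f]] (the Jacobiator). Then the difference of the two iterated variations of the action satisfies δ²S_L(γ)(η,ξ) − δ²S_L(γ)(ξ,η) = ∫_{t₀}^{t₁} ⟨dL(a(t)), J[a(t), h(t), f(t)]⟩ dt, where δ²S_L(γ)(η,ξ) := ∫ d_T² L applied to the curve (a, ḟ+[a,f], ḣ+[a,h], Δḟ + [ḣ+[a,h], f] + [a, Δf]). In particular, if 𝔤 is a Lie algebra the second variation is symmetric. -/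
/-! The identity holds pointwise in `t`: by Schwarz's theorem the `d²L(a)` parts of the two
integrands cancel, and skew-symmetry reduces the difference of the remaining `dL(a)` arguments
to the Jacobiator. -/

/-- The second tangent lift `d_T²L` of a Lagrangian `L`, evaluated on a quadruple
`(y, ẏ, δy, δẏ)`: it equals `⟨dL(y), δẏ⟩ + d²L(y)(δy, ẏ)`. -/
noncomputable def dT2 {V : Type*} [NormedAddCommGroup V] [NormedSpace ℝ V]
    (L : V → ℝ) (y ydot δy δydot : V) : ℝ :=
  fderiv ℝ L y δydot + (fderiv ℝ (fderiv ℝ L) y δy) ydot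

def jacobiator {V : Type*} [AddCommGroup V] [Module ℝ V]
    (br : V →ₗ[ℝ] V →ₗ[ℝ] V) (a h f : V) : V :=
  br (br a h) f - br a (br h f) + br h (br a f)

theorem dT2_sub_dT2_swap {V : Type*} [NormedAddCommGroup V] [NormedSpace ℝ V] {L : V → ℝ}
    {y : V} (hL : ContDiffAt ℝ 2 L y) (u v w w' : V) :
    dT2 L y u v w - dT2 L y v u w' = fderiv ℝ L y (w - w') := by
  rw [dT2, dT2, hL.isSymmSndFDerivAt (by simp) u v, map_sub]
  ring

@[fun_prop]
theorem Continuous.bilinear_apply {X V : Type*} [TopologicalSpace X] [NormedAddCommGroup V]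
    [NormedSpace ℝ V] [FiniteDimensional ℝ V] (B : V →ₗ[ℝ] V →ₗ[ℝ] V) {x y : X → V}
    (hx : Continuous x) (hy : Continuous y) : Continuous fun t => B (x t) (y t) := by
  have hB : Continuous fun v => LinearMap.toContinuousLinearMap (B v) :=
    (LinearMap.toContinuousLinearMap.toLinearMap ∘ₗ B).continuous_of_finiteDimensional
  exact (hB.comp hx).clm_apply hy

theorem continuous_dT2 {X V : Type*} [TopologicalSpace X] [NormedAddCommGroup V]
    [NormedSpace ℝ V] {L : V → ℝ} (hL : ContDiff ℝ 2 L) {y u v w : X → V} (hy : Continuous y) (hu : Continuous u)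
    (hv : Continuous v) (hw : Continuous w) :
    Continuous fun t => dT2 L (y t) (u t) (v t) (w t) := by
  have hdL : Continuous (fderiv ℝ L) := hL.continuous_fderiv (by norm_num)
  have hd2L : Continuous (fderiv ℝ (fderiv ℝ L)) :=
    (hL.fderiv_right (m := 1) (by norm_num)).continuous_fderiv one_ne_zero
  exact ((hdL.comp hy).clm_apply hw).add (((hd2L.comp hy).clm_apply hv).clm_apply hu)

theorem variation_sub_variation_eq_jacobiator {V : Type*} [AddCommGroup V] [Module ℝ V]
    (br : V →ₗ[ℝ] V →ₗ[ℝ] V) (hskew : ∀ x y : V, br x y = - br y x)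
    (a h f dh df dΔf Δf : V) :
    (dΔf + br (dh + br a h) f + br a Δf)
      - (dΔf + br dh f + br h df + br (df + br a f) h + br a (Δf + br h f))
      = jacobiator br a h f := by
  simp only [jacobiator, map_add, LinearMap.add_apply, hskew df h, hskew (br a f) h]
  abel

theorem stmt6_general {V : Type*} [NormedAddCommGroup V] [NormedSpace ℝ V]
    [FiniteDimensional ℝ V]
    (br : V →ₗ[ℝ] V →ₗ[ℝ] V)
    (hskew : ∀ x y : V, br x y = - br y x)
    (L : V → ℝ) (hL : ContDiff ℝ 2 L)
    (t₀ t₁ : ℝ)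
    (a h f Δf : ℝ → V)
    (ha : ContDiff ℝ 2 a) (hh : ContDiff ℝ 2 h) (hf : ContDiff ℝ 2 f)
    (hΔf : ContDiff ℝ 2 Δf) :
    (∫ t in t₀..t₁,
        dT2 L (a t) (deriv f t + br (a t) (f t)) (deriv h t + br (a t) (h t))
          (deriv Δf t + br (deriv h t + br (a t) (h t)) (f t) + br (a t) (Δf t)))
      -
    (∫ t in t₀..t₁,
        dT2 L (a t) (deriv h t + br (a t) (h t)) (deriv f t + br (a t) (f t))
          (deriv Δf t + br (deriv h t) (f t) + br (h t) (deriv f t)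
            + br (deriv f t + br (a t) (f t)) (h t)
            + br (a t) (Δf t + br (h t) (f t))))
      =
    ∫ t in t₀..t₁, fderiv ℝ L (a t) (jacobiator br (a t) (h t) (f t)) := by
  have hdf := hf.continuous_deriv one_le_two
  have hdh := hh.continuous_deriv one_le_two
  have hdΔf := hΔf.continuous_deriv one_le_two
  rw [← intervalIntegral.integral_sub]
  · refine intervalIntegral.integral_congr fun t _ => ?_
    simp only [dT2_sub_dT2_swap hL.contDiffAt, variation_sub_variation_eq_jacobiator br hskew]
  all_goals refine (continuous_dT2 hL ha.continuous ?_ ?_ ?_).intervalIntegrable _ _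
  all_goals fun_prop

/-- For a Lagrangian `L` on a skew-symmetric algebra `𝔤`, the difference of the two
iterated variations of the action equals the integral of `⟨dL(a(t)), J(a,h,f)(t)⟩`,
where `J` is the Jacobiator. In particular, for a Lie algebra the second variation
is symmetric. -/
theorem stmt6 {V : Type*} [NormedAddCommGroup V] [NormedSpace ℝ V]
    [FiniteDimensional ℝ V]
    (br : V →ₗ[ℝ] V →ₗ[ℝ] V)
    (hskew : ∀ x y : V, br x y = - br y x)
    (L : V → ℝ) (hL : ContDiff ℝ 2 L)
    (t₀ t₁ : ℝ) (hle : t₀ ≤ t₁)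
    (a h f Δf : ℝ → V)
    (ha : ContDiff ℝ 2 a) (hh : ContDiff ℝ 2 h) (hf : ContDiff ℝ 2 f)
    (hΔf : ContDiff ℝ 2 Δf)
    (hf0 : f t₀ = 0) (hf1 : f t₁ = 0)
    (hh0 : h t₀ = 0) (hh1 : h t₁ = 0)
    (hΔf0 : Δf t₀ = 0) (hΔf1 : Δf t₁ = 0) :
    (∫ t in t₀..t₁,
        dT2 L (a t) (deriv f t + br (a t) (f t)) (deriv h t + br (a t) (h t))
          (deriv Δf t + br (deriv h t + br (a t) (h t)) (f t) + br (a t) (Δf t)))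
      -
    (∫ t in t₀..t₁,
        dT2 L (a t) (deriv h t + br (a t) (h t)) (deriv f t + br (a t) (f t))
          (deriv Δf t + br (deriv h t) (f t) + br (h t) (deriv f t)
            + br (deriv f t + br (a t) (f t)) (h t)
            + br (a t) (Δf t + br (h t) (f t))))
      =
    ∫ t in t₀..t₁, fderiv ℝ L (a t) (jacobiator br (a t) (h t) (f t)) :=
  stmt6_general br hskew L hL t₀ t₁ a h f Δf ha hh hf hΔf
end

section
/- Let Q, S, N be finite-dimensional real vector spaces (chart models), F : Q → ℝ a C² function, p : Q → N a C² map, and P = Dp : Q → L(Q,S) with S = N (so P(q) = Dp(q)). Suppose q ∈ Q is a critical point of F relative to P, i.e. DF(q) X = 0 for all X ∈ ker Dp(q). Then for X ∈ Q and Y ∈ ker Dp(q), and any C² homotopy q(s₁,s₂) with q(0,0)=q, ∂_{s₁}q(0,0)=X, ∂_{s₂}q(0,0)=Y, and ∂_{s₁}∂_{s₂}p(q(s₁,s₂))|_{(0,0)} = 0, the value ∂_{s₁}∂_{s₂}F(q(s₁,s₂))|_{(0,0)} is independent of the choice of such a homotopy and depends bilinearly on (X,Y). -/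
/-!
Since `DF(q)` vanishes on `ker Dp(q)`, it factors as `DF(q) = λ ∘ Dp(q)` for a linear form `λ`
on `N` (a Lagrange multiplier). For a homotopy with `Z = ∂₁∂₂q(0,0)` the chain rule gives
`∂₁∂₂F(q(s)) = D²F(q)(X,Y) + DF(q) Z` and `0 = ∂₁∂₂p(q(s)) = D²p(q)(X,Y) + Dp(q) Z`, so
`DF(q) Z = λ (Dp(q) Z) = -λ (D²p(q)(X,Y))`: the mixed derivative of `F` equals
`D²F(q)(X,Y) - λ (D²p(q)(X,Y))`, which sees the homotopy only through `X` and `Y`.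
-/

theorem LinearMap.exists_comp_eq_of_ker_le {K V V' W : Type*} [Field K] [AddCommGroup V]
    [Module K V] [AddCommGroup V'] [Module K V'] [AddCommGroup W] [Module K W]
    {f : V →ₗ[K] W} {g : V →ₗ[K] V'} (h : ker g ≤ ker f) :
    ∃ l : V' →ₗ[K] W, l ∘ₗ g = f := by
  obtain ⟨l, hl⟩ :=
    exists_extend ((ker g).liftQ f h ∘ₗ g.quotKerEquivRange.symm.toLinearMap)
  refine ⟨l, ext fun x => ?_⟩
  simpa [quotKerEquivRange_symm_apply_image] using
    LinearMap.congr_fun hl ⟨g x, mem_range_self g x⟩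

section MixedPartial

variable {E : Type*} [NormedAddCommGroup E] [NormedSpace ℝ E]

theorem DifferentiableAt.hasDerivAt_comp_prodMk_left {f : ℝ × ℝ → E} {a b : ℝ}
    (hf : DifferentiableAt ℝ f (a, b)) :
    HasDerivAt (fun s => f (s, b)) (fderiv ℝ f (a, b) (1, 0)) a :=
  hf.hasFDerivAt.comp_hasDerivAt_of_eq a ((hasDerivAt_id a).prodMk (hasDerivAt_const a b)) rfl

theorem DifferentiableAt.hasDerivAt_comp_prodMk_right {f : ℝ × ℝ → E} {a b : ℝ}
    (hf : DifferentiableAt ℝ f (a, b)) :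
    HasDerivAt (fun s => f (a, s)) (fderiv ℝ f (a, b) (0, 1)) b :=
  hf.hasFDerivAt.comp_hasDerivAt_of_eq b ((hasDerivAt_const b a).prodMk (hasDerivAt_id b)) rfl

theorem deriv_deriv_eq_fderiv_fderiv {f : ℝ × ℝ → E} (hf : ContDiff ℝ 2 f) (a b : ℝ) :
    deriv (fun s₁ => deriv (fun s₂ => f (s₁, s₂)) b) a =
      fderiv ℝ (fderiv ℝ f) (a, b) (1, 0) (0, 1) := by
  have hf' : Differentiable ℝ (fderiv ℝ f) :=
    (hf.fderiv_right (by norm_num)).differentiable one_ne_zero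
  have hinner : (fun s₁ => deriv (fun s₂ => f (s₁, s₂)) b) =
      fun s₁ => fderiv ℝ f (s₁, b) (0, 1) :=
    funext fun s₁ => (hf.differentiable two_ne_zero (s₁, b)).hasDerivAt_comp_prodMk_right.deriv
  rw [hinner]
  exact ((hf' (a, b)).hasDerivAt_comp_prodMk_left.clm_apply
    (hasDerivAt_const a ((0, 1) : ℝ × ℝ))).deriv.trans (by simp)

end MixedPartial

section SecondDerivComp

variable {E F G : Type*} [NormedAddCommGroup E] [NormedSpace ℝ E] [NormedAddCommGroup F]
  [NormedSpace ℝ F] [NormedAddCommGroup G] [NormedSpace ℝ G]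

theorem fderiv_fderiv_comp_apply {g : F → G} {f : E → F} (hg : ContDiff ℝ 2 g)
    (hf : ContDiff ℝ 2 f) (x u v : E) :
    fderiv ℝ (fderiv ℝ (g ∘ f)) x u v =
      fderiv ℝ (fderiv ℝ g) (f x) (fderiv ℝ f x u) (fderiv ℝ f x v)
        + fderiv ℝ g (f x) (fderiv ℝ (fderiv ℝ f) x u v) := by
  have hgd := hg.differentiable two_ne_zero
  have hfd := hf.differentiable two_ne_zero
  have hg' : Differentiable ℝ (fderiv ℝ g) :=
    (hg.fderiv_right (by norm_num)).differentiable one_ne_zero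
  have hf' : Differentiable ℝ (fderiv ℝ f) :=
    (hf.fderiv_right (by norm_num)).differentiable one_ne_zero
  have hcomp : fderiv ℝ (g ∘ f) = fun y => (fderiv ℝ g (f y)).comp (fderiv ℝ f y) :=
    funext fun y => fderiv_comp y (hgd _) (hfd y)
  have hd : HasFDerivAt (fun y => (fderiv ℝ g (f y)).comp (fderiv ℝ f y)) _ x :=
    ((hg' (f x)).hasFDerivAt.comp x (hfd x).hasFDerivAt).clm_comp (hf' x).hasFDerivAt
  rw [hcomp, hd.fderiv]
  simp [add_comm]

theorem deriv_deriv_comp {g : F → G} {γ : ℝ × ℝ → F} (hg : ContDiff ℝ 2 g)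
    (hγ : ContDiff ℝ 2 γ) (a b : ℝ) :
    deriv (fun s₁ => deriv (fun s₂ => g (γ (s₁, s₂))) b) a =
      fderiv ℝ (fderiv ℝ g) (γ (a, b)) (deriv (fun s => γ (s, b)) a)
          (deriv (fun s => γ (a, s)) b)
        + fderiv ℝ g (γ (a, b)) (fderiv ℝ (fderiv ℝ γ) (a, b) (1, 0) (0, 1)) := by
  have hγd := hγ.differentiable two_ne_zero (a, b)
  rw [hγd.hasDerivAt_comp_prodMk_left.deriv, hγd.hasDerivAt_comp_prodMk_right.deriv,
    ← fderiv_fderiv_comp_apply hg hγ]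
  exact deriv_deriv_eq_fderiv_fderiv (hg.comp hγ) a b

end SecondDerivComp

theorem stmt12_general {Q N : Type*} [NormedAddCommGroup Q] [NormedSpace ℝ Q]
    [NormedAddCommGroup N] [NormedSpace ℝ N]
    (F : Q → ℝ) (hF : ContDiff ℝ 2 F)
    (p : Q → N) (hp : ContDiff ℝ 2 p)
    (q : Q)
    (hcrit : ∀ X : Q, fderiv ℝ p q X = 0 → fderiv ℝ F q X = 0) :
    ∃ B : Q →ₗ[ℝ] Q →ₗ[ℝ] ℝ,
      ∀ (X Y : Q), fderiv ℝ p q Y = 0 →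
        ∀ γ : ℝ × ℝ → Q, ContDiff ℝ 2 γ → γ (0, 0) = q →
          deriv (fun s₁ => γ (s₁, 0)) 0 = X →
          deriv (fun s₂ => γ (0, s₂)) 0 = Y →
          deriv (fun s₁ => deriv (fun s₂ => p (γ (s₁, s₂))) 0) 0 = 0 →
          deriv (fun s₁ => deriv (fun s₂ => F (γ (s₁, s₂))) 0) 0 = B X Y := by
  obtain ⟨l, hl⟩ := LinearMap.exists_comp_eq_of_ker_le
    (f := (fderiv ℝ F q).toLinearMap) (g := (fderiv ℝ p q).toLinearMap) hcrit
  refine ⟨ContinuousLinearMap.coeLM ℝ ∘ₗ (fderiv ℝ (fderiv ℝ F) q).toLinearMap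
    - (ContinuousLinearMap.coeLM ℝ ∘ₗ (fderiv ℝ (fderiv ℝ p) q).toLinearMap).compr₂ l, ?_⟩
  rintro X Y - γ hγ rfl hX hY hp_mixed
  set Z := fderiv ℝ (fderiv ℝ γ) (0, 0) (1, 0) (0, 1)
  have hpZ : fderiv ℝ p (γ (0, 0)) Z = -fderiv ℝ (fderiv ℝ p) (γ (0, 0)) X Y := by
    rw [deriv_deriv_comp hp hγ, hX, hY] at hp_mixed
    exact eq_neg_of_add_eq_zero_right hp_mixed
  have hFZ : fderiv ℝ F (γ (0, 0)) Z = l (fderiv ℝ p (γ (0, 0)) Z) :=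
    (LinearMap.congr_fun hl Z).symm
  rw [deriv_deriv_comp hF hγ, hX, hY, hFZ, hpZ]
  simp [sub_eq_add_neg]

/-- Let `q` be a critical point of `F : Q → ℝ` relative to `P = Dp`, i.e. `DF(q)`
vanishes on `ker Dp(q)`. Then for `X ∈ Q` and `Y ∈ ker Dp(q)`, the value
`∂_{s₁}∂_{s₂} F(q(s₁,s₂))|_{(0,0)}` along any C² homotopy with `q(0,0) = q`,
`∂_{s₁}q(0,0) = X`, `∂_{s₂}q(0,0) = Y` and vanishing mixed second derivative of
`p ∘ q`, is independent of the homotopy and depends bilinearly on `(X,Y)`. -/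
theorem stmt12 {Q N : Type*} [NormedAddCommGroup Q] [NormedSpace ℝ Q]
    [FiniteDimensional ℝ Q] [NormedAddCommGroup N] [NormedSpace ℝ N]
    [FiniteDimensional ℝ N]
    (F : Q → ℝ) (hF : ContDiff ℝ 2 F)
    (p : Q → N) (hp : ContDiff ℝ 2 p)
    (q : Q)
    (hcrit : ∀ X : Q, fderiv ℝ p q X = 0 → fderiv ℝ F q X = 0) :
    ∃ B : Q →ₗ[ℝ] Q →ₗ[ℝ] ℝ,
      ∀ (X Y : Q), fderiv ℝ p q Y = 0 →
        ∀ γ : ℝ × ℝ → Q, ContDiff ℝ 2 γ → γ (0, 0) = q →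
          deriv (fun s₁ => γ (s₁, 0)) 0 = X →
          deriv (fun s₂ => γ (0, s₂)) 0 = Y →
          deriv (fun s₁ => deriv (fun s₂ => p (γ (s₁, s₂))) 0) 0 = 0 →
          deriv (fun s₁ => deriv (fun s₂ => F (γ (s₁, s₂))) 0) 0 = B X Y :=
  stmt12_general F hF p hp q hcrit
end
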